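/- The one-dimensional joint density of skew Brownian motion and its local time at 0, given for θ > 0 by f(t,x,y,θ) = (1 + q·sign(y)) (σ²θ + |x| + |y|)/√(2πt³σ²) · exp(-(σ²θ + |x| + |y|)²/(2tσ²)), together with the atom at θ = 0 of mass a(t,x,y) = (2πtσ²)^{-1/2}[exp(-(y-x)²/(2tσ²)) - exp(-(|y|+|x|)²/(2tσ²))], defines a probability measure: for all t > 0 and x ∈ ℝ, ∫_ℝ a(t,x,y) dy + ∫_ℝ ∫₀^∞ f(t,x,y,θ) dθ dy = 1. -/

import Mathlib

open Real MeasureTheory Filter Set Topology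

noncomputable def sgn (y : ℝ) : ℝ := if 0 < y then 1 else if y < 0 then -1 else 0

/-- Atom at `θ = 0` of the joint law of skew BM and its local time. -/
noncomputable def atomDensity (σ t x y : ℝ) : ℝ :=
  (Real.sqrt (2 * Real.pi * t * σ ^ 2))⁻¹ *
    (Real.exp (-(y - x) ^ 2 / (2 * t * σ ^ 2)) -
      Real.exp (-(|y| + |x|) ^ 2 / (2 * t * σ ^ 2)))

/-- Joint density (for `θ > 0`) of skew BM at time `t` and its local time at `0`. -/
noncomputable def jointDensity (σ q t x y θ : ℝ) : ℝ :=
  (1 + q * sgn y) * (σ ^ 2 * θ + |x| + |y|) / Real.sqrt (2 * Real.pi * t ^ 3 * σ ^ 2) *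
    Real.exp (-(σ ^ 2 * θ + |x| + |y|) ^ 2 / (2 * t * σ ^ 2))

/-!
Integrating the density in `θ` is exact: `(σ²θ + m) exp (-(σ²θ + m)² / (2tσ²))` is a derivative in
`θ`, so with `m = |x| + |y|` the `θ`-integral is `(1 + q sgn y)` times the folded Gaussian
`g(y) = exp (-(|y| + |x|)² / (2tσ²)) / √(2πtσ²)`. The atom is a Gaussian density of mass one minus
the same `g`. Since `g` is even, the `q sgn y` part integrates to zero, and the two contributions of
`g` cancel.
-/

open ProbabilityTheory
open scoped NNReal

lemma integral_Ioi_affine_mul_exp_neg_sq_div {s c m : ℝ} (hs : 0 < s) (hc : 0 < c) (hm : 0 ≤ m) :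
    ∫ θ in Ioi 0, (s * θ + m) * exp (-(s * θ + m) ^ 2 / c) = c / (2 * s) * exp (-m ^ 2 / c) := by
  set F : ℝ → ℝ := fun θ ↦ -(c / (2 * s)) * exp (-(s * θ + m) ^ 2 / c)
  have hF : ∀ θ, HasDerivAt F ((s * θ + m) * exp (-(s * θ + m) ^ 2 / c)) θ := by
    intro θ
    have hu : HasDerivAt (fun θ ↦ -(s * θ + m) ^ 2 / c) (-(2 * (s * θ + m) * s) / c) θ := by
      simpa using ((((hasDerivAt_id θ).const_mul s).add_const m).pow 2).neg.div_const c
    refine (hu.exp.const_mul _).congr_deriv ?_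
    field_simp
  have hF_lim : Tendsto F atTop (𝓝 0) := by
    have hsq : Tendsto (fun θ ↦ (s * θ + m) ^ 2 / c) atTop atTop :=
      ((tendsto_pow_atTop two_ne_zero).comp
        (tendsto_atTop_add_const_right _ m (tendsto_id.const_mul_atTop hs))).atTop_div_const hc
    simpa [F, neg_div] using (tendsto_exp_neg_atTop_nhds_zero.comp hsq).const_mul (-(c / (2 * s)))
  rw [integral_Ioi_of_hasDerivAt_of_nonneg' (fun θ _ ↦ hF θ)
    (fun θ hθ ↦ by have := hθ.out.le; positivity) hF_lim]
  simp [F]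

lemma gaussianPDFReal_abs_le {m : ℝ} (hm : m ≤ 0) (v : ℝ≥0) (y : ℝ) :
    gaussianPDFReal m v |y| ≤ gaussianPDFReal 0 v y := by
  have : y ^ 2 ≤ (|y| - m) ^ 2 := by nlinarith [sq_abs y, abs_nonneg y]
  unfold gaussianPDFReal
  gcongr ?_ * exp (- ?_ / _)
  simpa using this

lemma integrable_gaussianPDFReal_abs {m : ℝ} (hm : m ≤ 0) (v : ℝ≥0) :
    Integrable fun y ↦ gaussianPDFReal m v |y| :=
  (integrable_gaussianPDFReal 0 v).mono'
    ((measurable_gaussianPDFReal m v).comp measurable_abs).aestronglyMeasurable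
    (ae_of_all _ fun y ↦ by
      rw [norm_of_nonneg (gaussianPDFReal_nonneg _ _ _)]
      exact gaussianPDFReal_abs_le hm v y)

lemma measurable_sgn : Measurable sgn := by
  unfold sgn
  exact Measurable.ite measurableSet_Ioi measurable_const
    (Measurable.ite measurableSet_Iio measurable_const measurable_const)

lemma sgn_neg (y : ℝ) : sgn (-y) = -sgn y := by
  unfold sgn
  rcases lt_trichotomy y 0 with h | rfl | h
  · simp [h, h.not_gt]
  · simp
  · simp [h, h.not_gt]

lemma abs_sgn_le_one (y : ℝ) : |sgn y| ≤ 1 := by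
  unfold sgn
  split_ifs <;> norm_num

lemma integral_eq_zero_of_odd {f : ℝ → ℝ} (hf : ∀ x, f (-x) = -f x) : ∫ x, f x = 0 := by
  have h : ∫ x, f x = -∫ x, f x :=
    calc ∫ x, f x = ∫ x, f (-x) := (integral_neg_eq_self f volume).symm
      _ = -∫ x, f x := by simp only [hf, integral_neg]
  linarith

lemma integral_one_add_mul_sgn_mul_of_even {g : ℝ → ℝ} (hg : Integrable g)
    (hg_even : ∀ y, g (-y) = g y) (q : ℝ) : ∫ y, (1 + q * sgn y) * g y = ∫ y, g y := by
  have hsgn : Integrable fun y ↦ sgn y * g y :=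
    hg.bdd_mul measurable_sgn.aestronglyMeasurable
      (ae_of_all _ fun y ↦ by simpa using abs_sgn_le_one y)
  have hodd : ∫ y, sgn y * g y = 0 :=
    integral_eq_zero_of_odd fun y ↦ by rw [sgn_neg, hg_even, neg_mul]
  simp only [add_mul, one_mul, mul_assoc]
  rw [integral_add hg (hsgn.const_mul q), integral_const_mul, hodd, mul_zero, add_zero]

lemma atomDensity_eq {t : ℝ} (ht : 0 ≤ t) (σ x y : ℝ) :
    atomDensity σ t x y = gaussianPDFReal x (t * σ ^ 2).toNNReal y -
      gaussianPDFReal (-|x|) (t * σ ^ 2).toNNReal |y| := by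
  simp only [atomDensity, gaussianPDFReal, Real.coe_toNNReal _ (by positivity : 0 ≤ t * σ ^ 2)]
  ring_nf

lemma integral_Ioi_jointDensity {σ t : ℝ} (hσ : σ ≠ 0) (ht : 0 < t) (q x y : ℝ) :
    ∫ θ in Ioi 0, jointDensity σ q t x y θ =
      (1 + q * sgn y) * gaussianPDFReal (-|x|) (t * σ ^ 2).toNNReal |y| := by
  have hsqrt : √(2 * π * t ^ 3 * σ ^ 2) = t * √(2 * π * (t * σ ^ 2)) := by
    rw [show 2 * π * t ^ 3 * σ ^ 2 = t ^ 2 * (2 * π * (t * σ ^ 2)) by ring,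
      sqrt_mul (sq_nonneg t), sqrt_sq ht.le]
  have hdens : ∀ θ, jointDensity σ q t x y θ = (1 + q * sgn y) / √(2 * π * t ^ 3 * σ ^ 2) *
      ((σ ^ 2 * θ + (|x| + |y|)) * exp (-(σ ^ 2 * θ + (|x| + |y|)) ^ 2 / (2 * t * σ ^ 2))) := by
    intro θ
    simp only [jointDensity, add_assoc]
    ring
  simp only [hdens, integral_const_mul]
  rw [integral_Ioi_affine_mul_exp_neg_sq_div (by positivity) (by positivity) (by positivity),
    gaussianPDFReal, Real.coe_toNNReal _ (by positivity), hsqrt]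
  field_simp
  ring_nf

theorem joint_law_is_probability_general (σ q : ℝ) (hσ : 0 < σ) :
    ∀ t x : ℝ, 0 < t →
      (∫ y : ℝ, atomDensity σ t x y) +
        (∫ y : ℝ, ∫ θ in Set.Ioi (0 : ℝ), jointDensity σ q t x y θ) = 1 := by
  intro t x ht
  set v : ℝ≥0 := (t * σ ^ 2).toNNReal
  have hv : v ≠ 0 := by positivity
  have hfolded := integrable_gaussianPDFReal_abs (neg_nonpos.mpr (abs_nonneg x)) v
  simp only [atomDensity_eq ht.le, integral_Ioi_jointDensity hσ.ne' ht]
  rw [integral_sub (integrable_gaussianPDFReal x v) hfolded, integral_gaussianPDFReal_eq_one x hv,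
    integral_one_add_mul_sgn_mul_of_even hfolded (fun y ↦ by rw [abs_neg]) q, sub_add_cancel]

theorem joint_law_is_probability (σ q : ℝ) (hσ : 0 < σ) (hq : q ∈ Set.Icc (-1 : ℝ) 1) :
    ∀ t x : ℝ, 0 < t →
      (∫ y : ℝ, atomDensity σ t x y) +
        (∫ y : ℝ, ∫ θ in Set.Ioi (0 : ℝ), jointDensity σ q t x y θ) = 1 :=
  joint_law_is_probability_general σ q hσ
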